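/- Let m ∈ ℕ and t := t_{m+1}. Let μ ∈ X be such that μ ≠ t(μ) and the untwisted Bruhat edge between μ and t(μ) is directed toward t(μ). Then the map ν ↦ t(ν) is a bijection from the set of in-neighbors of μ in Γ^m (i.e., the set of weights ν = μ − kβ with (β,k) ∈ Φ⁺ × (ℤ∖{0}) such that the edge between ν and μ is directed toward μ in Γ^m) onto the set of in-neighbors of t(μ) in Γ^m with the element μ removed. In particular, Arr_m(μ) + 1 = Arr_m(t(μ)). -/

import Mathlib

open scoped BigOperators

namespace TypeATwisted

/-- `ℤ^{n+1}`. -/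
abbrev V (n : ℕ) := Fin (n + 1) → ℤ

/-- The vector `(1,…,1)`. -/
def onesV (n : ℕ) : V n := fun _ => 1

/-- The subgroup `ℤ·(1,…,1)`. -/
def lineZ (n : ℕ) : AddSubgroup (V n) := AddSubgroup.zmultiples (onesV n)

/-- The weight lattice `X = ℤ^{n+1}/ℤ·(1,…,1)` of `SL_{n+1}`. -/
abbrev X (n : ℕ) := V n ⧸ lineZ n

/-- The quotient map `ℤ^{n+1} → X`. -/
def toX (n : ℕ) : V n →+ X n := QuotientAddGroup.mk' (lineZ n)

/-- The positive root `e_a − e_b` (for `a < b`) as a vector in `ℤ^{n+1}`. -/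
def posRootV (n : ℕ) (a b : Fin (n + 1)) : V n := Pi.single a 1 - Pi.single b 1

/-- The positive root `e_a − e_b` (for `a < b`) as an element of `X`. -/
def posRootX (n : ℕ) (a b : Fin (n + 1)) : X n := toX n (posRootV n a b)

/-- The pairing `μ ↦ μ_a − μ_b` on `ℤ^{n+1}`. -/
def pairV (n : ℕ) (a b : Fin (n + 1)) : V n →+ ℤ :=
  (Pi.evalAddMonoidHom (fun _ => ℤ) a) - (Pi.evalAddMonoidHom (fun _ => ℤ) b)

lemma pairV_ker (n : ℕ) (a b : Fin (n + 1)) : ∀ v ∈ lineZ n, pairV n a b v = 0 := by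
  intro v hv
  rw [lineZ, AddSubgroup.mem_zmultiples_iff] at hv
  obtain ⟨k, rfl⟩ := hv
  simp [pairV, onesV]

/-- The pairing `⟨μ, β^∨⟩ = μ_a − μ_b` for the positive root `β = e_a − e_b`,
well defined on `X`. -/
def pairX (n : ℕ) (a b : Fin (n + 1)) : X n →+ ℤ :=
  QuotientAddGroup.lift (lineZ n) (pairV n a b) (pairV_ker n a b)

/-- The root lattice `ℤΦ ⊆ X`. -/
def rootLattice (n : ℕ) : AddSubgroup (X n) :=
  AddSubgroup.closure {x | ∃ a b : Fin (n + 1), a < b ∧ x = posRootX n a b}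

/-- `μ ∈ X` is dominant if it has a weakly decreasing representative. -/
def IsDominant (n : ℕ) (μ : X n) : Prop := ∃ v : V n, Antitone v ∧ toX n v = μ

/-- `μ ≤ λ` iff `λ − μ ∈ ℤΦ` and `μ` lies in the convex hull of the `S_{n+1}`-orbit
of `λ` inside `ℝ^{n+1}/ℝ·(1,…,1)`. -/
def wle (n : ℕ) (μ lam : X n) : Prop :=
  lam - μ ∈ rootLattice n ∧
  ∃ u v : V n, toX n u = μ ∧ toX n v = lam ∧ ∃ c : ℝ,
    (fun i => (u i : ℝ) + c) ∈
      convexHull ℝ {w : Fin (n + 1) → ℝ |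
        ∃ σ : Equiv.Perm (Fin (n + 1)), w = fun i => (v (σ i) : ℝ)}

/-- The untwisted Bruhat edge between `μ − kβ` and `μ` points toward `μ`
(`β = e_a − e_b`, `a < b`, `k ≠ 0`): `⟨μ,β^∨⟩ ≥ k > 0` or `⟨μ,β^∨⟩ < k < 0`. -/
def edgeToward (n : ℕ) (a b : Fin (n + 1)) (k : ℤ) (μ : X n) : Prop :=
  (0 < k ∧ k ≤ pairX n a b μ) ∨ (k < 0 ∧ pairX n a b μ < k)

/-- The edge between `μ − kβ` and `μ` is `m`-twisted: `β = α_{j,n}` (i.e. `b` is the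
last index), and with `c := k − ⟨μ,β^∨⟩` one has `c ≥ 1` and `(c−1)·n + j ≤ m`,
where `j = a + 1` (`1`-based). -/
def IsTwisted (n : ℕ) (m : ℕ∞) (a b : Fin (n + 1)) (k : ℤ) (μ : X n) : Prop :=
  b = Fin.last n ∧ 1 ≤ k - pairX n a b μ ∧
  (((k - pairX n a b μ - 1).toNat * n + (a : ℕ) + 1 : ℕ) : ℕ∞) ≤ m

/-- In the `m`-twisted Bruhat graph `Γ^m`, the edge between `μ − kβ` and `μ` is directed
toward `μ` iff exactly one of `(μ−kβ) ◁ μ` and `m`-twistedness holds.  (`m = 0` gives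
the untwisted Bruhat graph.) -/
def dirToward (n : ℕ) (m : ℕ∞) (a b : Fin (n + 1)) (k : ℤ) (μ : X n) : Prop :=
  Xor' (edgeToward n a b k μ) (IsTwisted n m a b k μ)

/-- The edge between `ν` and `μ` is directed toward `μ` in `Γ^m`. -/
def EdgeDirToward (n : ℕ) (m : ℕ∞) (ν μ : X n) : Prop :=
  ∃ a b : Fin (n + 1), a < b ∧ ∃ k : ℤ, k ≠ 0 ∧
    ν = μ - k • posRootX n a b ∧ dirToward n m a b k μ

/-- `Arr_m(μ,λ)`: the number of pairs `(β,k) ∈ Φ⁺ × (ℤ∖{0})` with `μ − kβ ≤ λ` and the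
edge between `μ − kβ` and `μ` directed toward `μ` in `Γ^m`. -/
noncomputable def ArrRes (n : ℕ) (m : ℕ∞) (μ lam : X n) : ℕ :=
  {p : (Fin (n + 1) × Fin (n + 1)) × ℤ | p.1.1 < p.1.2 ∧ p.2 ≠ 0 ∧
    wle n (μ - p.2 • posRootX n p.1.1 p.1.2) lam ∧
    dirToward n m p.1.1 p.1.2 p.2 μ}.ncard

/-- `Arr_m(μ)`: the number of pairs `(β,k) ∈ Φ⁺ × (ℤ∖{0})` with the edge between
`μ − kβ` and `μ` directed toward `μ` in `Γ^m`. -/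
noncomputable def Arr (n : ℕ) (m : ℕ∞) (μ : X n) : ℕ :=
  {p : (Fin (n + 1) × Fin (n + 1)) × ℤ | p.1.1 < p.1.2 ∧ p.2 ≠ 0 ∧
    dirToward n m p.1.1 p.1.2 p.2 μ}.ncard

/-- The affine reflection `r_{β,c}(ν) = ν − (c + ⟨ν,β^∨⟩)·β` for `β = e_a − e_b`. -/
def areflect (n : ℕ) (a b : Fin (n + 1)) (c : ℤ) : X n → X n :=
  fun ν => ν - (c + pairX n a b ν) • posRootX n a b

/-- `ℓ^β(μ)`: `⟨μ,β^∨⟩` if `⟨μ,β^∨⟩ ≥ 0`, and `−⟨μ,β^∨⟩ − 1` otherwise. -/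
def ellBeta (n : ℕ) (a b : Fin (n + 1)) (μ : X n) : ℕ :=
  if 0 ≤ pairX n a b μ then (pairX n a b μ).toNat else (-(pairX n a b μ) - 1).toNat

end TypeATwisted

/-!
The affine reflection `t = r_{β,c}`, `β = e_a - e_last`, is an involution of `X` with
`t (μ - k γ) = t μ - k s_β(γ)` and `⟨t μ, (s_β γ)^∨⟩ = ⟨μ, γ^∨⟩ + c ⟨β, γ^∨⟩`, where `s_β` swaps the
coordinates `a` and `last`. So it carries the edge `(γ, k)` at `μ` to the edge `(s_β γ, k)` at
`t μ` (rewritten with a positive root). Going through the six positions of `γ` relative to `β`,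
this correspondence preserves the direction in `Γ^m` of every edge except the edge between `μ`
and `t μ`, which points away from `μ` and towards `t μ`.
-/

lemma Set.bijOn_sdiff_singleton_of_leftInvOn {α : Type*} {f : α → α} {P s t : Set α} {p₀ : α}
    (hf : Set.LeftInvOn f f P) (hfP : Set.MapsTo f P P) (hsP : s ⊆ P) (htP : t ⊆ P)
    (hp₀ : p₀ ∈ P) (hp₀s : p₀ ∉ s) (hst : ∀ p ∈ P, p ≠ p₀ → (f p ∈ t ↔ p ∈ s)) :
    Set.BijOn f s (t \ {f p₀}) := by
  refine ⟨fun p hp => ⟨(hst p (hsP hp) (ne_of_mem_of_not_mem hp hp₀s)).2 hp, fun hfp => ?_⟩,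
    hf.injOn.mono hsP, fun q ⟨hqt, hq⟩ => ?_⟩
  · exact hp₀s (hf.injOn (hsP hp) hp₀ hfp ▸ hp)
  · have hfq : f q ≠ p₀ := fun h => hq (by rw [← h, hf (htP hqt)]; rfl)
    exact ⟨f q, (hst _ (hfP (htP hqt)) hfq).1 (by rwa [hf (htP hqt)]), hf (htP hqt)⟩

lemma Set.BijOn.image_of_comp_eq {α β : Type*} {f : α → α} {g : β → β} {φ ψ : α → β}
    {s t : Set α} (hf : Set.BijOn f s t) (hg : Set.InjOn g (φ '' s))
    (hcomm : ∀ p ∈ s, g (φ p) = ψ (f p)) : Set.BijOn g (φ '' s) (ψ '' t) := by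
  have himage : g '' (φ '' s) = ψ '' t := by
    rw [← hf.image_eq, ← Set.image_comp, ← Set.image_comp]
    exact Set.EqOn.image_eq hcomm
  exact himage ▸ hg.bijOn_image

lemma mul_add_lt_mul_add_iff_lex {N x y : ℤ} (K L : ℤ) (hx : 0 ≤ x) (hxN : x < N) (hy : 0 ≤ y)
    (hyN : y < N) : K * N + x < L * N + y ↔ K < L ∨ K = L ∧ x < y := by
  constructor
  · intro h
    rcases lt_trichotomy K L with hKL | rfl | hKL
    · exact Or.inl hKL
    · exact Or.inr ⟨rfl, by linarith⟩
    · nlinarith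
  · rintro (hKL | ⟨rfl, hxy⟩)
    · nlinarith
    · linarith

namespace TypeATwisted

variable {n : ℕ}

lemma pairX_toX (a b : Fin (n + 1)) (v : V n) : pairX n a b (toX n v) = v a - v b := rfl

lemma pairX_comm (a b : Fin (n + 1)) (ν : X n) : pairX n b a ν = -pairX n a b ν := by
  induction ν using QuotientAddGroup.induction_on with
  | H v => exact (neg_sub (v a) (v b)).symm

lemma posRootX_comm (a b : Fin (n + 1)) : posRootX n b a = -posRootX n a b := by
  simp only [posRootX, posRootV, ← map_neg, neg_sub]

lemma pairX_posRootX (x y a b : Fin (n + 1)) :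
    pairX n x y (posRootX n a b) =
      ((if x = a then 1 else 0) - if x = b then 1 else 0) -
        ((if y = a then 1 else 0) - if y = b then 1 else 0) := by
  simp only [posRootX, pairX_toX, posRootV, Pi.sub_apply, Pi.single_apply]

lemma pairX_posRootX_self {a b : Fin (n + 1)} (hab : a ≠ b) :
    pairX n a b (posRootX n a b) = 2 := by
  simp [pairX_posRootX, hab, hab.symm]

lemma sub_pairV_smul_posRootV (a b : Fin (n + 1)) (v : V n) :
    v - pairV n a b v • posRootV n a b = v ∘ Equiv.swap a b := by
  ext i
  simp only [pairV, posRootV, AddMonoidHom.sub_apply, Pi.evalAddMonoidHom_apply, Pi.sub_apply,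
    Pi.smul_apply, Pi.single_apply, Function.comp_apply, Equiv.swap_apply_def, smul_eq_mul]
  split_ifs <;> simp_all

lemma posRootV_comp_swap (a b x y : Fin (n + 1)) :
    posRootV n x y ∘ Equiv.swap a b = posRootV n (Equiv.swap a b x) (Equiv.swap a b y) := by
  ext i
  simp [posRootV, Pi.single_apply, Equiv.swap_apply_eq_iff]

lemma posRootX_sub_pairX_smul (a b x y : Fin (n + 1)) :
    posRootX n x y - pairX n a b (posRootX n x y) • posRootX n a b =
      posRootX n (Equiv.swap a b x) (Equiv.swap a b y) := by
  simp only [posRootX, ← posRootV_comp_swap, ← sub_pairV_smul_posRootV, map_sub, map_zsmul]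
  rfl

lemma pairX_posRootX_comm (x y x' y' : Fin (n + 1)) :
    pairX n x y (posRootX n x' y') = pairX n x' y' (posRootX n x y) := by
  simp only [pairX_posRootX, eq_comm (a := x'), eq_comm (a := y')]
  ring

lemma eq_of_smul_posRootX_eq {x y x' y' : Fin (n + 1)} {k k' : ℤ} (hxy : x < y)
    (hxy' : x' < y') (hk : k ≠ 0) (h : k • posRootX n x y = k' • posRootX n x' y') :
    x = x' ∧ y = y' ∧ k = k' := by
  set q := pairX n x y (posRootX n x' y') with hq_def
  -- Pairing `h` with both coroots forces `q = ±2`; `q = 2` only for equal roots, and `q = -2`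
  -- would need `e_x' - e_y' = e_y - e_x`.
  have h1 : k * 2 = k' * q := by
    simpa [pairX_posRootX_self hxy.ne] using congrArg (pairX n x y) h
  have h2 : k * q = k' * 2 := by
    simpa [pairX_posRootX_self hxy'.ne, ← pairX_posRootX_comm] using congrArg (pairX n x' y') h
  have hq : q = 2 ∨ q = -2 := by
    have : k * (q - 2) * (q + 2) = 0 := by linear_combination q * h2 - 2 * h1
    rcases mul_eq_zero.mp this with h0 | h0
    · exact Or.inl (by simpa [hk, sub_eq_zero] using h0)
    · exact Or.inr (by linarith)
  rw [Fin.lt_def] at hxy hxy'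
  rcases hq with hq | hq
  · have hkk' : k = k' := by rw [hq] at h1; omega
    rw [hq_def, pairX_posRootX] at hq
    simp only [Fin.ext_iff] at hq ⊢
    split_ifs at hq <;> omega
  · rw [hq_def, pairX_posRootX] at hq
    simp only [Fin.ext_iff] at hq
    split_ifs at hq <;> omega

section Reflection

variable (a b : Fin (n + 1)) (c : ℤ)

lemma areflect_sub_smul (ν : X n) (k : ℤ) (x y : Fin (n + 1)) :
    areflect n a b c (ν - k • posRootX n x y) =
      areflect n a b c ν - k • posRootX n (Equiv.swap a b x) (Equiv.swap a b y) := by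
  rw [← posRootX_sub_pairX_smul]
  simp only [areflect, map_sub, map_zsmul, smul_eq_mul]
  module

lemma areflect_areflect {a b : Fin (n + 1)} (hab : a ≠ b) (ν : X n) :
    areflect n a b c (areflect n a b c ν) = ν := by
  simp only [areflect, map_sub, map_zsmul, smul_eq_mul, pairX_posRootX_self hab]
  module

lemma pairX_areflect (ν : X n) (x y : Fin (n + 1)) :
    pairX n (Equiv.swap a b x) (Equiv.swap a b y) (areflect n a b c ν) =
      pairX n x y ν + c * pairX n x y (posRootX n a b) := by
  induction ν using QuotientAddGroup.induction_on with
  | H v =>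
    have hreflect :
        areflect n a b c (toX n v) = toX n (v ∘ Equiv.swap a b - c • posRootV n a b) := by
      rw [← sub_pairV_smul_posRootV]
      simp only [areflect, posRootX, map_sub, map_zsmul, pairX_toX, pairV, AddMonoidHom.sub_apply,
        Pi.evalAddMonoidHom_apply]
      module
    have hβ : ∀ i, posRootV n a b (Equiv.swap a b i) = -posRootV n a b i := fun i => by
      simpa [posRootV] using congrFun (posRootV_comp_swap a b a b) i
    change pairX n _ _ (areflect n a b c (toX n v)) = pairX n x y (toX n v) + _
    rw [hreflect, posRootX, pairX_toX, pairX_toX, pairX_toX]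
    simp only [Pi.sub_apply, Function.comp_apply, Equiv.swap_apply_self, Pi.smul_apply, hβ,
      smul_eq_mul]
    ring

end Reflection

/-- `((x, y), k)` stands for the pair `(e_x - e_y, k)`; at `μ` it is the edge between
`arrowTail μ ((x, y), k) = μ - k (e_x - e_y)` and `μ`. -/
abbrev Arrow (n : ℕ) := (Fin (n + 1) × Fin (n + 1)) × ℤ

def validArrows (n : ℕ) : Set (Arrow n) := {p | p.1.1 < p.1.2 ∧ p.2 ≠ 0}

def inArrows (n : ℕ) (m : ℕ∞) (μ : X n) : Set (Arrow n) :=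
  {p | p.1.1 < p.1.2 ∧ p.2 ≠ 0 ∧ dirToward n m p.1.1 p.1.2 p.2 μ}

def arrowTail (μ : X n) (p : Arrow n) : X n := μ - p.2 • posRootX n p.1.1 p.1.2

lemma inArrows_subset_validArrows (m : ℕ∞) (μ : X n) : inArrows n m μ ⊆ validArrows n :=
  fun _ hp => ⟨hp.1, hp.2.1⟩

lemma arr_eq_ncard_inArrows (m : ℕ∞) (μ : X n) : Arr n m μ = (inArrows n m μ).ncard := rfl

lemma setOf_edgeDirToward_eq_image (m : ℕ∞) (μ : X n) :
    {ν | EdgeDirToward n m ν μ} = arrowTail μ '' inArrows n m μ := by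
  ext ν
  simp only [EdgeDirToward, inArrows, arrowTail, Set.mem_image, Prod.exists]
  constructor
  · rintro ⟨x, y, hxy, k, hk, rfl, hdir⟩
    exact ⟨x, y, k, ⟨hxy, hk, hdir⟩, rfl⟩
  · rintro ⟨x, y, k, ⟨hxy, hk, hdir⟩, rfl⟩
    exact ⟨x, y, hxy, k, hk, rfl, hdir⟩

lemma injOn_arrowTail (μ : X n) : Set.InjOn (arrowTail μ) (validArrows n) := by
  rintro ⟨⟨x, y⟩, k⟩ ⟨hxy, hk⟩ ⟨⟨x', y'⟩, k'⟩ ⟨hxy', -⟩ h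
  obtain ⟨rfl, rfl, rfl⟩ := eq_of_smul_posRootX_eq hxy hxy' hk (sub_right_injective h)
  rfl

def orient (i j : Fin (n + 1)) (k : ℤ) : Arrow n := if i < j then ((i, j), k) else ((j, i), -k)

lemma arrowTail_orient (μ : X n) (i j : Fin (n + 1)) (k : ℤ) :
    arrowTail μ (orient i j k) = μ - k • posRootX n i j := by
  unfold orient
  split_ifs
  · rfl
  · simp [arrowTail, posRootX_comm j i]

lemma orient_mem_validArrows {i j : Fin (n + 1)} (hij : i ≠ j) {k : ℤ} (hk : k ≠ 0) :
    orient i j k ∈ validArrows n := by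
  unfold orient
  split_ifs with h
  · exact ⟨h, hk⟩
  · exact ⟨lt_of_le_of_ne (not_lt.mp h) hij.symm, neg_ne_zero.mpr hk⟩

section ReflectArrow

variable (a b : Fin (n + 1))

def reflectArrow (p : Arrow n) : Arrow n :=
  orient (Equiv.swap a b p.1.1) (Equiv.swap a b p.1.2) p.2

lemma reflectArrow_mem_validArrows {p : Arrow n} (hp : p ∈ validArrows n) :
    reflectArrow a b p ∈ validArrows n :=
  orient_mem_validArrows ((Equiv.swap a b).injective.ne hp.1.ne) hp.2

lemma reflectArrow_reflectArrow {p : Arrow n} (hp : p ∈ validArrows n) :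
    reflectArrow a b (reflectArrow a b p) = p := by
  obtain ⟨⟨x, y⟩, k⟩ := p
  have hxy : x < y := hp.1
  simp only [reflectArrow, orient]
  split_ifs <;> simp_all [not_lt_of_gt hxy]

lemma areflect_arrowTail (c : ℤ) (μ : X n) (p : Arrow n) :
    areflect n a b c (arrowTail μ p) = arrowTail (areflect n a b c μ) (reflectArrow a b p) := by
  rw [reflectArrow, arrowTail_orient, arrowTail, areflect_sub_smul]

end ReflectArrow

section Twist

variable {m : ℕ} {a : Fin (n + 1)} {c : ℤ}

lemma isTwisted_last_iff (ha : (a : ℕ) < n) (hidx : (c - 1) * (n : ℤ) + ((a : ℕ) + 1) = m + 1)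
    {x : Fin (n + 1)} (hx : x < Fin.last n) (k : ℤ) (ν : X n) :
    IsTwisted n m x (Fin.last n) k ν ↔
      1 ≤ k - pairX n x (Fin.last n) ν ∧
        (k - pairX n x (Fin.last n) ν < c ∨
          k - pairX n x (Fin.last n) ν = c ∧ (x : ℕ) < (a : ℕ)) := by
  have hxn : (x : ℕ) < n := hx
  simp only [IsTwisted, true_and, Nat.cast_le]
  refine and_congr_right fun hK => ?_
  have hlex := mul_add_lt_mul_add_iff_lex (k - pairX n x (Fin.last n) ν - 1) (c - 1)
    (Int.natCast_nonneg x) (Int.ofNat_lt.mpr hxn) (Int.natCast_nonneg a) (Int.ofNat_lt.mpr ha)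
  zify
  rw [Int.toNat_of_nonneg (by omega)]
  omega

lemma dirToward_of_ne_last {m : ℕ∞} {x y : Fin (n + 1)} (hy : y ≠ Fin.last n) (k : ℤ)
    (ν : X n) :
    dirToward n m x y k ν ↔ edgeToward n x y k ν := by
  show Xor _ _ ↔ _
  simp [xor_def, IsTwisted, hy]

lemma dirToward_last_iff (ha : (a : ℕ) < n) (hidx : (c - 1) * (n : ℤ) + ((a : ℕ) + 1) = m + 1)
    {x : Fin (n + 1)} (hx : x < Fin.last n) (k : ℤ) (ν : X n) :
    dirToward n m x (Fin.last n) k ν ↔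
      (edgeToward n x (Fin.last n) k ν ↔
        ¬(1 ≤ k - pairX n x (Fin.last n) ν ∧
          (k - pairX n x (Fin.last n) ν < c ∨
            k - pairX n x (Fin.last n) ν = c ∧ (x : ℕ) < (a : ℕ)))) :=
  xor_iff_iff_not.trans (by rw [isTwisted_last_iff ha hidx hx])

lemma dirToward_reflectArrow_iff_of_snd_eq_last (ha : (a : ℕ) < n) (hc : 1 ≤ c)
    (hidx : (c - 1) * (n : ℤ) + ((a : ℕ) + 1) = m + 1) {μ : X n} {x : Fin (n + 1)}
    (hx : x < Fin.last n) {k : ℤ} (hk : k ≠ 0)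
    (hk₀ : x = a → k ≠ c + pairX n a (Fin.last n) μ) :
    dirToward n m (reflectArrow a (Fin.last n) ((x, Fin.last n), k)).1.1
        (reflectArrow a (Fin.last n) ((x, Fin.last n), k)).1.2
        (reflectArrow a (Fin.last n) ((x, Fin.last n), k)).2 (areflect n a (Fin.last n) c μ) ↔
      dirToward n m x (Fin.last n) k μ := by
  have hal : a < Fin.last n := ha
  have hP := pairX_areflect a (Fin.last n) c μ x (Fin.last n)
  simp only [reflectArrow, orient, Equiv.swap_apply_right] at hP ⊢
  rw [dirToward_last_iff ha hidx hx]
  rcases lt_trichotomy x a with hxa | rfl | hax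
  · simp only [Equiv.swap_apply_of_ne_of_ne hxa.ne hx.ne, hxa, if_true] at hP ⊢
    simp [pairX_posRootX, hxa.ne, hx.ne, hal.ne'] at hP
    rw [dirToward_of_ne_last hal.ne]
    simp only [edgeToward]
    omega
  · simp only [Equiv.swap_apply_left, not_lt_of_gt hal, if_false] at hP ⊢
    rw [pairX_comm, pairX_posRootX_self hal.ne] at hP
    rw [dirToward_last_iff ha hidx hal]
    have hkD := hk₀ rfl
    simp only [edgeToward]
    omega
  · simp only [Equiv.swap_apply_of_ne_of_ne hax.ne' hx.ne, not_lt_of_gt hax, if_false] at hP ⊢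
    rw [pairX_comm] at hP
    simp [pairX_posRootX, hax.ne', hx.ne, hal.ne'] at hP
    rw [dirToward_of_ne_last hx.ne]
    simp only [edgeToward]
    omega

lemma dirToward_reflectArrow_iff_of_snd_ne_last (ha : (a : ℕ) < n) (hc : 1 ≤ c)
    (hidx : (c - 1) * (n : ℤ) + ((a : ℕ) + 1) = m + 1) {μ : X n} {x y : Fin (n + 1)}
    (hxy : x < y) (hy : y ≠ Fin.last n) {k : ℤ} (hk : k ≠ 0) :
    dirToward n m (reflectArrow a (Fin.last n) ((x, y), k)).1.1
        (reflectArrow a (Fin.last n) ((x, y), k)).1.2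
        (reflectArrow a (Fin.last n) ((x, y), k)).2 (areflect n a (Fin.last n) c μ) ↔
      dirToward n m x y k μ := by
  have hal : a < Fin.last n := ha
  have hyl : y < Fin.last n := lt_of_le_of_ne (Fin.le_last y) hy
  have hxl := (hxy.trans hyl).ne
  have hP := pairX_areflect a (Fin.last n) c μ x y
  simp only [reflectArrow, orient]
  rw [dirToward_of_ne_last hy]
  rcases eq_or_ne x a with rfl | hxa
  · simp only [Equiv.swap_apply_left, Equiv.swap_apply_of_ne_of_ne hxy.ne' hy,
      not_lt_of_gt hyl, if_false] at hP ⊢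
    rw [pairX_comm] at hP
    simp [pairX_posRootX, hxy.ne', hy, hal.ne] at hP
    rw [dirToward_last_iff ha hidx hyl]
    simp only [edgeToward]
    omega
  rcases eq_or_ne y a with rfl | hya
  · simp only [Equiv.swap_apply_left, Equiv.swap_apply_of_ne_of_ne hxa hxl,
      hxy.trans hal, if_true] at hP ⊢
    simp [pairX_posRootX, hxa, hxl, hal.ne] at hP
    rw [dirToward_last_iff ha hidx (hxy.trans hal)]
    simp only [edgeToward]
    omega
  · simp only [Equiv.swap_apply_of_ne_of_ne hxa hxl, Equiv.swap_apply_of_ne_of_ne hya hy, hxy,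
      if_true] at hP ⊢
    simp [pairX_posRootX, hxa, hya, hxl, hy] at hP
    rw [dirToward_of_ne_last hy]
    simp only [edgeToward, hP]

lemma not_dirToward_of_not_edgeToward (ha : (a : ℕ) < n)
    (hidx : (c - 1) * (n : ℤ) + ((a : ℕ) + 1) = m + 1) {μ : X n}
    (h : ¬edgeToward n a (Fin.last n) (c + pairX n a (Fin.last n) μ) μ) :
    ¬dirToward n m a (Fin.last n) (c + pairX n a (Fin.last n) μ) μ := by
  rw [dirToward_last_iff ha hidx ha]
  exact fun hdir => h (hdir.mpr (by omega))

lemma dirToward_areflect (ha : (a : ℕ) < n) (hc : 1 ≤ c)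
    (hidx : (c - 1) * (n : ℤ) + ((a : ℕ) + 1) = m + 1) {μ : X n}
    (hD : 0 < c + pairX n a (Fin.last n) μ) :
    dirToward n m a (Fin.last n) (-(c + pairX n a (Fin.last n) μ))
      (areflect n a (Fin.last n) c μ) := by
  have hal : a < Fin.last n := ha
  rw [dirToward_last_iff ha hidx ha]
  simp only [edgeToward, areflect, map_sub, map_zsmul, smul_eq_mul, pairX_posRootX_self hal.ne]
  omega

lemma mem_inArrows_iff {m : ℕ∞} {μ : X n} {p : Arrow n} :
    p ∈ inArrows n m μ ↔ p ∈ validArrows n ∧ dirToward n m p.1.1 p.1.2 p.2 μ :=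
  and_assoc.symm

lemma reflectArrow_mem_inArrows_iff (ha : (a : ℕ) < n) (hc : 1 ≤ c)
    (hidx : (c - 1) * (n : ℤ) + ((a : ℕ) + 1) = m + 1) {μ : X n} {p : Arrow n}
    (hp : p ∈ validArrows n) (hp₀ : p ≠ ((a, Fin.last n), c + pairX n a (Fin.last n) μ)) :
    reflectArrow a (Fin.last n) p ∈ inArrows n m (areflect n a (Fin.last n) c μ) ↔
      p ∈ inArrows n m μ := by
  rw [mem_inArrows_iff, mem_inArrows_iff, and_iff_right hp,
    and_iff_right (reflectArrow_mem_validArrows _ _ hp)]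
  obtain ⟨⟨x, y⟩, k⟩ := p
  rcases eq_or_ne y (Fin.last n) with rfl | hy
  · exact dirToward_reflectArrow_iff_of_snd_eq_last ha hc hidx hp.1 hp.2
      (fun hxa hkD => hp₀ (by simp only at hxa; rw [hxa, hkD]))
  · exact dirToward_reflectArrow_iff_of_snd_ne_last ha hc hidx hp.1 hy hp.2

end Twist

lemma inArrows_finite (m : ℕ) (μ : X n) : (inArrows n m μ).Finite := by
  refine (Set.finite_iUnion fun q : Fin (n + 1) × Fin (n + 1) => (Set.finite_singleton q).prod
    (Set.finite_Icc (-|pairX n q.1 q.2 μ|) (|pairX n q.1 q.2 μ| + m + 1))).subset ?_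
  rintro ⟨⟨x, y⟩, k⟩ ⟨hxy, -, hdir⟩
  simp only [Set.mem_iUnion, Set.mem_prod, Set.mem_singleton_iff, Set.mem_Icc]
  refine ⟨(x, y), rfl, ?_⟩
  dsimp only at hxy hdir ⊢
  have hn : 1 ≤ n := by have := y.is_le; have : (x : ℕ) < y := hxy; omega
  have := le_abs_self (pairX n x y μ)
  have := neg_abs_le (pairX n x y μ)
  rcases hdir with ⟨hE, -⟩ | ⟨⟨-, hK, hm⟩, -⟩
  · simp only [edgeToward] at hE
    omega
  · rw [Nat.cast_le] at hm
    have := Nat.le_mul_of_pos_right (k - pairX n x y μ - 1).toNat hn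
    omega

lemma not_isTwisted_zero (x y : Fin (n + 1)) (k : ℤ) (ν : X n) : ¬IsTwisted n 0 x y k ν := by
  simp [IsTwisted]

lemma not_edgeToward_of_edgeDirToward_zero {a b : Fin (n + 1)} (hab : a < b) {μ : X n} {D : ℤ}
    (h : EdgeDirToward n 0 μ (μ - D • posRootX n a b)) : D ≠ 0 ∧ ¬edgeToward n a b D μ := by
  obtain ⟨x, y, hxy, k, hk, heq, hdir⟩ := h
  have hroot : k • posRootX n x y = (-D) • posRootX n a b := by
    linear_combination (norm := module) heq
  obtain ⟨rfl, rfl, rfl⟩ := eq_of_smul_posRootX_eq hxy hab hk hroot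
  refine ⟨neg_ne_zero.mp hk, fun hE => ?_⟩
  rcases hdir with ⟨hE', -⟩ | ⟨hT, -⟩
  · simp only [edgeToward, map_sub, map_zsmul, smul_eq_mul, pairX_posRootX_self hab.ne] at hE hE'
    omega
  · exact not_isTwisted_zero _ _ _ _ hT

lemma bijOn_reflectArrow_inArrows {m : ℕ} {a : Fin (n + 1)} {c : ℤ} (ha : (a : ℕ) < n)
    (hc : 1 ≤ c) (hidx : (c - 1) * (n : ℤ) + ((a : ℕ) + 1) = m + 1) {μ : X n}
    (hD : 0 < c + pairX n a (Fin.last n) μ)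
    (hnotEdge : ¬edgeToward n a (Fin.last n) (c + pairX n a (Fin.last n) μ) μ) :
    Set.BijOn (reflectArrow a (Fin.last n)) (inArrows n m μ)
      (inArrows n m (areflect n a (Fin.last n) c μ) \
        {((a, Fin.last n), -(c + pairX n a (Fin.last n) μ))}) := by
  have hal : a < Fin.last n := ha
  have hreflect₀ : reflectArrow a (Fin.last n) ((a, Fin.last n), c + pairX n a (Fin.last n) μ) =
      ((a, Fin.last n), -(c + pairX n a (Fin.last n) μ)) := by
    simp [reflectArrow, orient, not_lt_of_gt hal]
  exact hreflect₀ ▸ Set.bijOn_sdiff_singleton_of_leftInvOn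
    (fun p hp => reflectArrow_reflectArrow _ _ hp) (fun p hp => reflectArrow_mem_validArrows _ _ hp)
    (inArrows_subset_validArrows _ _) (inArrows_subset_validArrows _ _) ⟨hal, hD.ne'⟩
    (fun h => not_dirToward_of_not_edgeToward ha hidx hnotEdge h.2.2)
    (fun p hp hne => reflectArrow_mem_inArrows_iff ha hc hidx hp hne)

end TypeATwisted

open TypeATwisted

theorem statement8_general (n m : ℕ)
    (a : Fin (n + 1)) (c : ℤ) (ha : (a : ℕ) < n) (hc : 1 ≤ c)
    (hidx : (c - 1) * (n : ℤ) + ((a : ℕ) + 1) = (m : ℤ) + 1)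
    (t : X n → X n) (htdef : t = areflect n a (Fin.last n) c)
    (μ : X n)
    (hdir : EdgeDirToward n 0 μ (t μ)) :
    Set.BijOn t {ν | EdgeDirToward n (m : ℕ∞) ν μ}
      ({ν | EdgeDirToward n (m : ℕ∞) ν (t μ)} \ {μ}) ∧
    Arr n (m : ℕ∞) μ + 1 = Arr n (m : ℕ∞) (t μ) := by
  subst htdef
  set t := areflect n a (Fin.last n) c
  have hal : a < Fin.last n := ha
  set D := c + pairX n a (Fin.last n) μ
  have htμ : t μ = μ - D • posRootX n a (Fin.last n) := rfl
  obtain ⟨hD₀, hnotEdge⟩ := not_edgeToward_of_edgeDirToward_zero hal (htμ ▸ hdir)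
  have hD : 0 < D := by simp only [edgeToward] at hnotEdge; omega
  have hq₀ : ((a, Fin.last n), -D) ∈ inArrows n m (t μ) :=
    ⟨hal, neg_ne_zero.mpr hD₀, dirToward_areflect ha hc hidx hD⟩
  have hbij := bijOn_reflectArrow_inArrows ha hc hidx hD hnotEdge
  have hneighbours : arrowTail (t μ) '' (inArrows n m (t μ) \ {((a, Fin.last n), -D)}) =
      {ν | EdgeDirToward n m ν (t μ)} \ {μ} := by
    rw [((injOn_arrowTail _).mono (inArrows_subset_validArrows _ _)).image_sdiff_subset
      (Set.singleton_subset_iff.mpr hq₀), Set.image_singleton, setOf_edgeDirToward_eq_image]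
    congr 2
    simp only [arrowTail, htμ]
    module
  refine ⟨?_, ?_⟩
  · rw [setOf_edgeDirToward_eq_image, ← hneighbours]
    exact hbij.image_of_comp_eq (Function.LeftInverse.injective (areflect_areflect c hal.ne)).injOn
      fun p _ => areflect_arrowTail _ _ c μ p
  · rw [arr_eq_ncard_inArrows, arr_eq_ncard_inArrows, hbij.ncard_eq,
      Set.ncard_sdiff_singleton_add_one hq₀ (inArrows_finite m _)]

/-- let `t = t_{m+1} = r_{α_{j,n},c}` with `(c−1)·n + j = m + 1` and let
`μ` satisfy `μ ≠ t(μ)` with the untwisted Bruhat edge between `μ` and `t(μ)` directed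
toward `t(μ)`.  Then `ν ↦ t(ν)` is a bijection from the in-neighbors of `μ` in `Γ^m`
onto the in-neighbors of `t(μ)` in `Γ^m` with `μ` removed; in particular,
`Arr_m(μ) + 1 = Arr_m(t(μ))`. -/
theorem statement8 (n m : ℕ) (hn : 2 ≤ n)
    (a : Fin (n + 1)) (c : ℤ) (ha : (a : ℕ) < n) (hc : 1 ≤ c)
    (hidx : (c - 1) * (n : ℤ) + ((a : ℕ) + 1) = (m : ℤ) + 1)
    (t : X n → X n) (htdef : t = areflect n a (Fin.last n) c)
    (μ : X n) (hne : μ ≠ t μ)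
    (hdir : EdgeDirToward n 0 μ (t μ)) :
    Set.BijOn t {ν | EdgeDirToward n (m : ℕ∞) ν μ}
      ({ν | EdgeDirToward n (m : ℕ∞) ν (t μ)} \ {μ}) ∧
    Arr n (m : ℕ∞) μ + 1 = Arr n (m : ℕ∞) (t μ) :=
  statement8_general n m a c ha hc hidx t htdef μ hdir
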